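/- If a unitary representation U of a finite group G on ℂ^d (d > 2) has a real-valued character, then {U_g : g ∈ G} is not a unitary 2-design. -/

import Mathlib

open MeasureTheory Matrix
open scoped Kronecker ComplexConjugate

noncomputable section

variable {ι : Type} [Fintype ι] [DecidableEq ι]

abbrev UG (ι : Type) [Fintype ι] [DecidableEq ι] := Matrix.unitaryGroup ι ℂ

instance : IsTopologicalGroup (UG ι) where
  continuous_mul := by
    apply Continuous.subtype_mk
    exact (continuous_subtype_val.comp continuous_fst).matrix_mul
      (continuous_subtype_val.comp continuous_snd)
  continuous_inv := by
    apply Continuous.subtype_mk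
    exact continuous_subtype_val.matrix_conjTranspose

theorem isCompact_UG : IsCompact (Matrix.unitaryGroup ι ℂ : Set (Matrix ι ι ℂ)) := by
  have hK : IsCompact (Set.univ.pi fun _ : ι => Set.univ.pi fun _ : ι =>
      Metric.closedBall (0:ℂ) 1) :=
    isCompact_univ_pi fun _ => isCompact_univ_pi fun _ => isCompact_closedBall _ _
  have hof : Continuous (Matrix.of : (ι → ι → ℂ) → Matrix ι ι ℂ) := continuous_id
  have hK' := hK.image hof
  have hcl : IsClosed (Matrix.unitaryGroup ι ℂ : Set (Matrix ι ι ℂ)) := by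
    have he : (Matrix.unitaryGroup ι ℂ : Set (Matrix ι ι ℂ)) =
        (fun A : Matrix ι ι ℂ => A * star A) ⁻¹' {1} := by
      ext A
      simp [Matrix.mem_unitaryGroup_iff]
    rw [he]
    exact IsClosed.preimage (continuous_id.matrix_mul continuous_id.matrix_conjTranspose)
      isClosed_singleton
  apply hK'.of_isClosed_subset hcl
  intro A hA
  have h1 : star A * A = 1 := (Matrix.mem_unitaryGroup_iff').1 hA
  refine ⟨fun i j => A i j, ?_, rfl⟩
  intro i _
  intro j _
  have h2 : ∑ k, Complex.normSq (A k j) = 1 := by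
    have h0 := congrFun (congrFun h1 j) j
    simp only [Matrix.mul_apply, Matrix.one_apply_eq, Matrix.star_apply] at h0
    have h3 : ∀ k : ι, star (A k j) * A k j = (Complex.normSq (A k j) : ℂ) := by
      intro k
      rw [Complex.star_def, Complex.normSq_eq_conj_mul_self]
    simp only [h3] at h0
    exact_mod_cast (by exact_mod_cast h0 : ((∑ k, Complex.normSq (A k j) : ℝ) : ℂ) = 1)
  simp only [Metric.mem_closedBall, dist_zero_right]
  have h4 : Complex.normSq (A i j) ≤ 1 := by
    rw [← h2]
    exact Finset.single_le_sum (f := fun k => Complex.normSq (A k j))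
      (fun k _ => Complex.normSq_nonneg _) (Finset.mem_univ i)
  nlinarith [norm_nonneg (A i j), Complex.normSq_eq_norm_sq (A i j)]

instance : CompactSpace (UG ι) := isCompact_iff_compactSpace.mp isCompact_UG

instance : MeasurableSpace (UG ι) := borel _
instance : BorelSpace (UG ι) := ⟨rfl⟩

/-- The normalized Haar (probability) measure on the unitary group. -/
def haarUG (ι : Type) [Fintype ι] [DecidableEq ι] : Measure (UG ι) :=
  Measure.haarMeasure
    (⟨⟨Set.univ, isCompact_univ⟩, by rw [interior_univ]; exact Set.univ_nonempty⟩ :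
      TopologicalSpace.PositiveCompacts (UG ι))

/-- Haar average of (U⊗U) ρ (U⊗U)†, defined entrywise. -/
def haarTwirl (ι : Type) [Fintype ι] [DecidableEq ι]
    (ρ : Matrix (ι × ι) (ι × ι) ℂ) : Matrix (ι × ι) (ι × ι) ℂ :=
  Matrix.of fun i j =>
    ∫ u : UG ι,
      ((((u : Matrix ι ι ℂ) ⊗ₖ (u : Matrix ι ι ℂ)) * ρ *
        ((u : Matrix ι ι ℂ) ⊗ₖ (u : Matrix ι ι ℂ))ᴴ) i j) ∂(haarUG ι)

/-- A finite family of matrices is a unitary 2-design. -/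
def IsUnitaryTwoDesign {κ : Type} [Fintype κ] (Us : κ → Matrix ι ι ℂ) : Prop :=
  (∀ k, Us k ∈ Matrix.unitaryGroup ι ℂ) ∧
  ∀ ρ : Matrix (ι × ι) (ι × ι) ℂ,
    ((Fintype.card κ : ℂ))⁻¹ • (∑ k, (Us k ⊗ₖ Us k) * ρ * (Us k ⊗ₖ Us k)ᴴ) = haarTwirl ι ρ

/-- The frame potential. -/
def framePotential {κ : Type} [Fintype κ] (Us : κ → Matrix ι ι ℂ) : ℝ :=
  ((Fintype.card κ : ℝ) ^ 2)⁻¹ *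
    ∑ k : κ, ∑ k' : κ, ‖Matrix.trace ((Us k)ᴴ * Us k')‖ ^ 4


/-!
The Haar twirl commutes with every `V ⊗ V`, so for a unitary 2-design `{U_g}` every operator that
is fixed by conjugation with all `U_g ⊗ U_g` lies in the commutant of `{V ⊗ V | V unitary}`, which
is spanned by `1` and the swap `F` (diagonal phases, permutation matrices and one real reflection
pin it down). The group average `P = |G|⁻¹ ∑ U_g ⊗ U_g` is such an operator; it is idempotent, and
nonzero because `tr P = |G|⁻¹ ∑ χ(g)² = |G|⁻¹ ∑ |χ(g)|² > 0` for a real character `χ`. Hence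
`P = a + b F` with `a ≠ 0`. But `P X P` is fixed as well for every `X`, and for `X = E_{rs}` with
`r = (0, 1)`, `s = (0, 2)` (this is where `d > 2` enters) its `(r, s)` entry is `a²`, while every
element of `span {1, F}` vanishes there.
-/

open Equiv

lemma Equiv.Perm.exists_apply_eq_and_apply_eq {α : Type*} [DecidableEq α] {i j k l : α}
    (hij : i ≠ j) (hkl : k ≠ l) : ∃ σ : Perm α, σ i = k ∧ σ j = l := by
  have hk : k ≠ swap i k j := fun h =>
    hij ((swap i k).injective ((swap_apply_left i k).trans h))
  exact ⟨swap (swap i k j) l * swap i k, by simp [swap_apply_of_ne_of_ne hk hkl], by simp⟩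

lemma Matrix.mul_single_mul_apply {l m n o α : Type*} [Fintype m] [Fintype n] [DecidableEq m]
    [DecidableEq n] [Semiring α] (A : Matrix l m α) (i : m) (j : n) (c : α) (B : Matrix n o α)
    (k : l) (k' : o) : (A * single i j c * B) k k' = A k i * c * B j k' := by
  rw [mul_apply, Fintype.sum_eq_single j fun y hy => by
    rw [mul_single_apply_of_ne _ _ _ _ _ hy, zero_mul], mul_single_apply_same]

lemma isStarProjection_vecMulVec {n : Type*} [Fintype n] {v : n → ℂ} (hv : star v ⬝ᵥ v = 1) :
    IsStarProjection (vecMulVec v (star v)) :=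
  ⟨by rw [IsIdempotentElem, vecMulVec_mul_vecMulVec, hv, one_smul], by
    rw [IsSelfAdjoint, star_eq_conjTranspose, conjTranspose_vecMulVec, star_star]⟩

section Commutant

variable {n : Type*} [DecidableEq n]

lemma eq_or_eq_swap_of_forall_count_eq {p q : n × n}
    (h : ∀ m : n, (if p.1 = m then 1 else 0) + (if p.2 = m then 1 else 0) =
      (if q.1 = m then 1 else 0) + (if q.2 = m then 1 else 0)) :
    q = p ∨ q = p.swap := by
  obtain ⟨a, b⟩ := p
  obtain ⟨c, e⟩ := q
  simp only [Prod.mk.injEq, Prod.swap_prod_mk] at h ⊢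
  rcases eq_or_ne c a with rfl | hca
  · have he := h e
    split_ifs at he <;> simp_all
  · have hc := h c
    have ha := h a
    split_ifs at hc ha <;> simp_all

variable (n) in
def swapMatrix : Matrix (n × n) (n × n) ℂ := Perm.permMatrix ℂ (Equiv.prodComm n n)

lemma swapMatrix_apply (p q : n × n) : swapMatrix n p q = if q = p.swap then 1 else 0 := by
  simp [swapMatrix, eq_comm]

variable [Fintype n]

lemma swapMatrix_mul_self : swapMatrix n * swapMatrix n = 1 := by
  rw [swapMatrix, PEquiv.toMatrix_toPEquiv_mul]
  ext p q
  simp [PEquiv.toMatrix_apply, one_apply]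

lemma diagonal_mem_unitaryGroup {t : n → ℂ} (ht : ∀ x, star (t x) * t x = 1) :
    diagonal t ∈ unitaryGroup n ℂ := by
  rw [mem_unitaryGroup_iff', star_eq_conjTranspose, diagonal_conjTranspose, diagonal_mul_diagonal]
  simp only [Pi.star_apply, ht, diagonal_one]

lemma permMatrix_mem_unitaryGroup (σ : Perm n) : σ.permMatrix ℂ ∈ unitaryGroup n ℂ := by
  rw [mem_unitaryGroup_iff, star_eq_conjTranspose, conjTranspose_permMatrix, ← permMatrix_mul,
    inv_mul_cancel, permMatrix_one]

variable (n) in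
def tensorSquareCommutant : Subalgebra ℂ (Matrix (n × n) (n × n) ℂ) :=
  Subalgebra.centralizer ℂ
    (Set.range fun v : unitaryGroup n ℂ => (v : Matrix n n ℂ) ⊗ₖ (v : Matrix n n ℂ))

lemma mem_tensorSquareCommutant_iff {N : Matrix (n × n) (n × n) ℂ} :
    N ∈ tensorSquareCommutant n ↔ ∀ v ∈ unitaryGroup n ℂ, (v ⊗ₖ v) * N = N * (v ⊗ₖ v) := by
  simp [tensorSquareCommutant, Subalgebra.mem_centralizer_iff]

lemma swapMatrix_mem_tensorSquareCommutant : swapMatrix n ∈ tensorSquareCommutant n := by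
  rw [mem_tensorSquareCommutant_iff]
  intro v _
  rw [swapMatrix, PEquiv.toMatrix_toPEquiv_mul, PEquiv.mul_toMatrix_toPEquiv]
  ext p q
  simp [kroneckerMap_apply, mul_comm]

variable {N : Matrix (n × n) (n × n) ℂ}

/-- Conjugating with the phase `I` at `m` on both factors multiplies the entry `(p, q)` by
`I ^ (#m in p - #m in q)`, so the multisets `{p.1, p.2}` and `{q.1, q.2}` must agree. -/
lemma apply_eq_zero_of_mem_tensorSquareCommutant (hN : N ∈ tensorSquareCommutant n)
    {p q : n × n} (hqp : q ≠ p) (hqp' : q ≠ p.swap) : N p q = 0 := by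
  by_contra hpq
  refine (eq_or_eq_swap_of_forall_count_eq fun m => ?_).elim hqp hqp'
  set e : n → ℕ := fun x => if x = m then 1 else 0
  have he : ∀ x, e x ≤ 1 := fun x => by simp only [e]; split_ifs <;> simp
  have hD : diagonal (fun x => Complex.I ^ e x) ∈ unitaryGroup n ℂ :=
    diagonal_mem_unitaryGroup fun x => by simp [← mul_pow]
  have h := congr_fun₂ (mem_tensorSquareCommutant_iff.mp hN _ hD) p q
  rw [diagonal_kronecker_diagonal, diagonal_mul, mul_diagonal, mul_comm (N p q), ← pow_add,
    ← pow_add] at h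
  exact Complex.isPrimitiveRoot_I.pow_inj (show e p.1 + e p.2 < 4 by linarith [he p.1, he p.2])
    (show e q.1 + e q.2 < 4 by linarith [he q.1, he q.2]) (mul_right_cancel₀ hpq h)

lemma apply_prodMap_eq_of_mem_tensorSquareCommutant (hN : N ∈ tensorSquareCommutant n)
    (σ : Perm n) (p q : n × n) : N (Prod.map σ σ p) (Prod.map σ σ q) = N p q := by
  have hkron : σ.permMatrix ℂ ⊗ₖ σ.permMatrix ℂ = Perm.permMatrix ℂ (σ.prodCongr σ) := by
    ext p q
    simp [PEquiv.toMatrix_apply, kroneckerMap_apply, Prod.ext_iff, ← ite_and, and_comm]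
  have h := mem_tensorSquareCommutant_iff.mp hN _ (permMatrix_mem_unitaryGroup σ)
  rw [hkron, PEquiv.toMatrix_toPEquiv_mul, PEquiv.mul_toMatrix_toPEquiv] at h
  simpa [Prod.map] using congr_fun₂ h p (σ.prodCongr σ q)

/-- Row `(i, i)` of `N` is supported at `(i, i)`, so the commutation relation with `H ⊗ H` at the
entry `((i, i), (i, j))` reads `N_{(i,i),(i,i)} H_ii H_ij = 0`, where `H = 2 v v* - 1` is the
reflection through `v = (3 e_i + 4 e_j) / 5`. -/
lemma apply_diag_eq_zero_of_mem_tensorSquareCommutant (hN : N ∈ tensorSquareCommutant n)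
    {i j : n} (hij : i ≠ j) (hcol : ∀ x, N x (i, j) = 0) : N (i, i) (i, i) = 0 := by
  set v : n → ℂ := Pi.single i (3 / 5) + Pi.single j (4 / 5)
  have hv : star v ⬝ᵥ v = 1 := by
    simp [v, dotProduct, Pi.single_apply, add_mul, mul_add, Finset.sum_add_distrib, hij, hij.symm,
      map_ofNat]
    norm_num
  set H := 2 * vecMulVec v (star v) - 1
  have hH : H ∈ unitaryGroup n ℂ := (isStarProjection_vecMulVec hv).two_mul_sub_one_mem_unitary
  have hii : H i i = -7 / 25 := by
    simp [H, v, two_mul, vecMulVec_apply, hij, one_apply]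
    norm_num
  have hij' : H i j = 24 / 25 := by
    simp [H, v, two_mul, vecMulVec_apply, hij, hij.symm, one_apply]
    norm_num
  have h := congr_fun₂ (mem_tensorSquareCommutant_iff.mp hN _ hH) (i, i) (i, j)
  rw [mul_apply, mul_apply, Finset.sum_eq_zero fun x _ => by rw [hcol, mul_zero],
    Fintype.sum_eq_single (i, i) fun y hy => by
      rw [apply_eq_zero_of_mem_tensorSquareCommutant hN hy hy, zero_mul]] at h
  simp only [kroneckerMap_apply, hii, hij'] at h
  exact (mul_eq_zero.mp h.symm).resolve_right (by norm_num)

lemma eq_zero_of_mem_tensorSquareCommutant (hN : N ∈ tensorSquareCommutant n) {i j : n}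
    (hij : i ≠ j) (ha : N (i, j) (i, j) = 0) (hb : N (i, j) (j, i) = 0) : N = 0 := by
  have hoff : ∀ p : n × n, p.1 ≠ p.2 → ∀ q, N p q = 0 := by
    intro p hp q
    obtain ⟨σ, hσi, hσj⟩ := Equiv.Perm.exists_apply_eq_and_apply_eq hij hp
    have hp : Prod.map σ σ (i, j) = p := by simp [hσi, hσj]
    have hp' : Prod.map σ σ (j, i) = p.swap := by simp [hσi, hσj, Prod.swap]
    by_cases hqp : q = p
    · rw [hqp, ← hp, apply_prodMap_eq_of_mem_tensorSquareCommutant hN, ha]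
    by_cases hqp' : q = p.swap
    · rw [hqp', ← hp', ← hp, apply_prodMap_eq_of_mem_tensorSquareCommutant hN, hb]
    exact apply_eq_zero_of_mem_tensorSquareCommutant hN hqp hqp'
  have hdiag : N (i, i) (i, i) = 0 := by
    refine apply_diag_eq_zero_of_mem_tensorSquareCommutant hN hij fun x => ?_
    by_cases hx : x.1 = x.2
    · obtain ⟨k, l⟩ := x
      obtain rfl : k = l := hx
      exact apply_eq_zero_of_mem_tensorSquareCommutant hN (by rintro ⟨⟩; exact hij rfl)
        (by rintro ⟨⟩; exact hij rfl)
    · exact hoff x hx _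
  ext ⟨k, l⟩ q
  rw [Matrix.zero_apply]
  by_cases hkl : k = l
  · subst hkl
    by_cases hq : q = (k, k)
    · rw [hq, ← hdiag]
      simpa using apply_prodMap_eq_of_mem_tensorSquareCommutant hN (swap i k) (i, i) (i, i)
    · exact apply_eq_zero_of_mem_tensorSquareCommutant hN hq hq
  · exact hoff _ hkl q

theorem exists_eq_smul_one_add_smul_swapMatrix [Nontrivial n] (hN : N ∈ tensorSquareCommutant n) :
    ∃ a b : ℂ, N = a • 1 + b • swapMatrix n := by
  obtain ⟨i, j, hij⟩ := exists_pair_ne n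
  refine ⟨N (i, j) (i, j), N (i, j) (j, i), sub_eq_zero.mp ?_⟩
  have hmem : N - (N (i, j) (i, j) • 1 + N (i, j) (j, i) • swapMatrix n) ∈
      tensorSquareCommutant n :=
    sub_mem hN (add_mem (Subalgebra.smul_mem _ (one_mem _) _)
      (Subalgebra.smul_mem _ swapMatrix_mem_tensorSquareCommutant _))
  refine eq_zero_of_mem_tensorSquareCommutant hmem hij ?_ ?_ <;>
    simp [swapMatrix_apply, one_apply, hij, hij.symm]

lemma ne_zero_of_isIdempotentElem_smul_one_add_smul_swapMatrix [Nontrivial n] {a b : ℂ}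
    (hidem : IsIdempotentElem (a • 1 + b • swapMatrix n)) (hne : a • 1 + b • swapMatrix n ≠ 0) :
    a ≠ 0 := by
  rintro rfl
  obtain ⟨i, j, hij⟩ := exists_pair_ne n
  have h := congr_fun₂ hidem.eq (i, j) (i, j)
  simp only [zero_smul, zero_add, smul_mul_smul, swapMatrix_mul_self] at h
  have hb : b = 0 := by simpa [swapMatrix_apply, one_apply, Prod.ext_iff, hij] using h
  exact hne (by simp [hb])

end Commutant

section GroupAverage

variable {k G A : Type*} [Field k] [Group G] [Fintype G] [Ring A] [Algebra k A]

variable (k) in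
def groupAverage (ρ : G →* A) : A := (Fintype.card G : k)⁻¹ • ∑ g, ρ g

lemma mul_groupAverage (ρ : G →* A) (h : G) : ρ h * groupAverage k ρ = groupAverage k ρ := by
  simp only [groupAverage, mul_smul_comm, Finset.mul_sum, ← map_mul]
  exact congrArg _ (Fintype.sum_equiv (Equiv.mulLeft h) _ _ fun _ => rfl)

lemma groupAverage_mul (ρ : G →* A) (h : G) : groupAverage k ρ * ρ h = groupAverage k ρ := by
  simp only [groupAverage, smul_mul_assoc, Finset.sum_mul, ← map_mul]
  exact congrArg _ (Fintype.sum_equiv (Equiv.mulRight h) _ _ fun _ => rfl)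

lemma isIdempotentElem_groupAverage [CharZero k] (ρ : G →* A) :
    IsIdempotentElem (groupAverage k ρ) := by
  have hcard : (Fintype.card G : k) ≠ 0 := Nat.cast_ne_zero.mpr Fintype.card_ne_zero
  unfold IsIdempotentElem
  nth_rewrite 1 [groupAverage]
  rw [smul_mul_assoc, Finset.sum_mul]
  simp only [mul_groupAverage, Finset.sum_const, Finset.card_univ]
  rw [← Nat.cast_smul_eq_nsmul k, smul_smul, inv_mul_cancel₀ hcard, one_smul]

lemma mul_groupAverage_mul_groupAverage_mul (ρ : G →* A) (X : A) (g : G) :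
    ρ g * (groupAverage k ρ * X * groupAverage k ρ) * ρ g⁻¹ =
      groupAverage k ρ * X * groupAverage k ρ := by
  rw [← mul_assoc, ← mul_assoc, mul_groupAverage, mul_assoc, groupAverage_mul]

end GroupAverage

section TensorSquare

variable {n : Type*} [Fintype n] [DecidableEq n]

variable (n) in
def tensorSquareHom : unitaryGroup n ℂ →* Matrix (n × n) (n × n) ℂ where
  toFun v := (v : Matrix n n ℂ) ⊗ₖ (v : Matrix n n ℂ)
  map_one' := one_kronecker_one
  map_mul' u v := by rw [UnitaryGroup.mul_val, mul_kronecker_mul]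

lemma tensorSquareHom_apply (v : unitaryGroup n ℂ) :
    tensorSquareHom n v = (v : Matrix n n ℂ) ⊗ₖ (v : Matrix n n ℂ) := rfl

lemma conjTranspose_tensorSquareHom (v : unitaryGroup n ℂ) :
    (tensorSquareHom n v)ᴴ = tensorSquareHom n v⁻¹ := by
  rw [tensorSquareHom_apply, tensorSquareHom_apply, conjTranspose_kronecker, UnitaryGroup.inv_val,
    star_eq_conjTranspose]

variable {G : Type*} [Group G] [Fintype G]

lemma groupAverage_tensorSquareHom_ne_zero [Nonempty n] (π : G →* unitaryGroup n ℂ)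
    (hreal : ∀ g : G, conj (trace (π g : Matrix n n ℂ)) = trace (π g : Matrix n n ℂ)) :
    groupAverage ℂ ((tensorSquareHom n).comp π) ≠ 0 := by
  intro h
  have hsq : ∀ g, trace ((tensorSquareHom n).comp π g) =
      (Complex.normSq (trace (π g : Matrix n n ℂ)) : ℂ) := fun g => by
    rw [MonoidHom.comp_apply, tensorSquareHom_apply, trace_kronecker, ← Complex.mul_conj, hreal]
  have hpos : 0 < ∑ g, Complex.normSq (trace (π g : Matrix n n ℂ)) := by
    refine lt_of_lt_of_le ?_ (Finset.single_le_sum (fun g _ => Complex.normSq_nonneg _)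
      (Finset.mem_univ 1))
    simp [Fintype.card_ne_zero]
  have htr := congrArg trace h
  rw [trace_zero, groupAverage, trace_smul, trace_sum, Finset.sum_congr rfl fun g _ => hsq g,
    smul_eq_mul] at htr
  exact mul_ne_zero (inv_ne_zero (Nat.cast_ne_zero.mpr Fintype.card_ne_zero))
    (by exact_mod_cast hpos.ne') htr

end TensorSquare

section HaarTwirl

lemma Continuous.matrix_kronecker {X : Type*} [TopologicalSpace X] {l m n o : Type*}
    {A : X → Matrix l m ℂ} {B : X → Matrix n o ℂ} (hA : Continuous A) (hB : Continuous B) :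
    Continuous fun x => A x ⊗ₖ B x :=
  continuous_matrix fun p q => (hA.matrix_elem p.1 q.1).mul (hB.matrix_elem p.2 q.2)

lemma mul_of_integral_mul_apply {X : Type*} [MeasurableSpace X] {μ : Measure X}
    {l m n o : Type*} [Fintype m] [Fintype n] (A : Matrix l m ℂ) {f : X → Matrix m n ℂ}
    (B : Matrix n o ℂ) (hf : ∀ i j, Integrable (fun x => f x i j) μ) (i : l) (j : o) :
    (A * Matrix.of (fun i j => ∫ x, f x i j ∂μ) * B) i j = ∫ x, (A * f x * B) i j ∂μ := by
  simp only [mul_apply, of_apply, Finset.sum_mul]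
  rw [integral_finsetSum _ fun y _ => integrable_finsetSum _ fun x _ =>
    ((hf x y).const_mul _).mul_const _]
  refine Finset.sum_congr rfl fun y _ => ?_
  rw [integral_finsetSum _ fun x _ => ((hf x y).const_mul _).mul_const _]
  simp only [integral_mul_const, integral_const_mul]

instance : (haarUG ι).IsHaarMeasure := Measure.isHaarMeasure_haarMeasure _

lemma tensorSquare_mul_haarTwirl_mul (ρ : Matrix (ι × ι) (ι × ι) ℂ) (v : UG ι) :
    ((v : Matrix ι ι ℂ) ⊗ₖ (v : Matrix ι ι ℂ)) * haarTwirl ι ρ *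
      ((v : Matrix ι ι ℂ) ⊗ₖ (v : Matrix ι ι ℂ))ᴴ = haarTwirl ι ρ := by
  set F : UG ι → Matrix (ι × ι) (ι × ι) ℂ := fun u =>
    ((u : Matrix ι ι ℂ) ⊗ₖ (u : Matrix ι ι ℂ)) * ρ * ((u : Matrix ι ι ℂ) ⊗ₖ (u : Matrix ι ι ℂ))ᴴ
  have hF : Continuous F := by
    have hk : Continuous fun u : UG ι => (u : Matrix ι ι ℂ) ⊗ₖ (u : Matrix ι ι ℂ) :=
      continuous_subtype_val.matrix_kronecker continuous_subtype_val
    exact (hk.matrix_mul continuous_const).matrix_mul hk.matrix_conjTranspose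
  have hmul : ∀ u, ((v : Matrix ι ι ℂ) ⊗ₖ (v : Matrix ι ι ℂ)) * F u *
      ((v : Matrix ι ι ℂ) ⊗ₖ (v : Matrix ι ι ℂ))ᴴ = F (v * u) := fun u => by
    simp only [F, UnitaryGroup.mul_val, mul_kronecker_mul, conjTranspose_mul, Matrix.mul_assoc]
  ext i j
  rw [haarTwirl, mul_of_integral_mul_apply _ _ fun i j =>
    (hF.matrix_elem i j).integrable_of_hasCompactSupport (.of_compactSpace _)]
  simp_rw [hmul]
  exact integral_mul_left_eq_self (fun u => F u i j) v

lemma haarTwirl_mem_tensorSquareCommutant (ρ : Matrix (ι × ι) (ι × ι) ℂ) :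
    haarTwirl ι ρ ∈ tensorSquareCommutant ι := by
  rw [mem_tensorSquareCommutant_iff]
  intro v hv
  have hvv := UnitaryGroup.star_mul_self (⟨_, kronecker_mem_unitary hv hv⟩ : unitaryGroup _ ℂ)
  rw [star_eq_conjTranspose] at hvv
  calc (v ⊗ₖ v) * haarTwirl ι ρ = (v ⊗ₖ v) * haarTwirl ι ρ * ((v ⊗ₖ v)ᴴ * (v ⊗ₖ v)) := by
        rw [hvv, Matrix.mul_one]
    _ = haarTwirl ι ρ * (v ⊗ₖ v) := by
        rw [← Matrix.mul_assoc, tensorSquare_mul_haarTwirl_mul ρ ⟨v, hv⟩]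

lemma IsUnitaryTwoDesign.mem_tensorSquareCommutant {κ : Type} [Fintype κ] [Nonempty κ]
    {Us : κ → Matrix ι ι ℂ} (hUs : IsUnitaryTwoDesign Us) {ρ : Matrix (ι × ι) (ι × ι) ℂ}
    (hρ : ∀ k, (Us k ⊗ₖ Us k) * ρ * (Us k ⊗ₖ Us k)ᴴ = ρ) :
    ρ ∈ tensorSquareCommutant ι := by
  have hcard : (Fintype.card κ : ℂ) ≠ 0 := Nat.cast_ne_zero.mpr Fintype.card_ne_zero
  have hfix : haarTwirl ι ρ = ρ := by
    rw [← hUs.2 ρ, Finset.sum_congr rfl fun k _ => hρ k, Finset.sum_const, Finset.card_univ,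
      ← Nat.cast_smul_eq_nsmul ℂ, smul_smul, inv_mul_cancel₀ hcard, one_smul]
  exact hfix ▸ haarTwirl_mem_tensorSquareCommutant ρ

end HaarTwirl

/-- for `d > 2`, a unitary representation with a real-valued
character never yields a unitary 2-design. -/
theorem real_character_not_twoDesign (d : ℕ) (hd : 2 < d)
    (G : Type) [Group G] [Fintype G] (π : G →* Matrix.unitaryGroup (Fin d) ℂ)
    (hreal : ∀ g : G,
      conj (Matrix.trace (π g : Matrix (Fin d) (Fin d) ℂ)) =
        Matrix.trace (π g : Matrix (Fin d) (Fin d) ℂ)) :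
    ¬ IsUnitaryTwoDesign (fun g : G => (π g : Matrix (Fin d) (Fin d) ℂ)) := by
  intro hdesign
  have : Nontrivial (Fin d) := Fin.nontrivial_iff_two_le.mpr hd.le
  set P := groupAverage ℂ ((tensorSquareHom (Fin d)).comp π)
  have hfix : ∀ X, P * X * P ∈ tensorSquareCommutant (Fin d) := fun X =>
    hdesign.mem_tensorSquareCommutant fun g => by
      have h :=
        mul_groupAverage_mul_groupAverage_mul (k := ℂ) ((tensorSquareHom (Fin d)).comp π) X g
      rwa [MonoidHom.comp_apply, MonoidHom.comp_apply, map_inv, ← conjTranspose_tensorSquareHom,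
        tensorSquareHom_apply] at h
  have hidem : IsIdempotentElem P := isIdempotentElem_groupAverage _
  have hne : P ≠ 0 := groupAverage_tensorSquareHom_ne_zero π hreal
  obtain ⟨a, b, hab⟩ := exists_eq_smul_one_add_smul_swapMatrix (by simpa [hidem.eq] using hfix 1)
  rw [hab] at hidem hne
  have ha := ne_zero_of_isIdempotentElem_smul_one_add_smul_swapMatrix hidem hne
  set r : Fin d × Fin d := (⟨0, by omega⟩, ⟨1, by omega⟩)
  set s : Fin d × Fin d := (⟨0, by omega⟩, ⟨2, by omega⟩)
  have h := apply_eq_zero_of_mem_tensorSquareCommutant (hfix (single r s 1)) (p := r) (q := s)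
    (by simp [r, s]) (by simp [r, s])
  rw [mul_single_mul_apply, mul_one, hab] at h
  exact ha (by simpa [r, s, swapMatrix_apply, one_apply] using h)
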